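/- Let N, m, ℓ be natural numbers with 3 ≤ ℓ, let F be any field, and let Cl : Fin m → Fin 3 → (Fin N × Bool) encode a 3-CNF formula in which the three variables of each clause are pairwise distinct. If Cl is satisfiable, then there exists a finset S : Finset I such that φ_ℓ(S) = t and ℓ + N + (ℓ−3)·m ≤ S.card ≤ ℓ + N + (ℓ−1)·m. -/

import Mathlib

open Finset

/-!
Fix a satisfying assignment `A` and let `t_j ∈ {1, 2, 3}` be the number of literals of clause `j`
made true by `A`. Take `S` to consist of all `α_k`, the `N` literals made true by `A`, and `ℓ - t_j`
gadgets of each clause `j`. Every entry of every element is `0` or `1`, so at each coordinate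
`φ_ℓ(S)` is the binomial coefficient `(n choose ℓ)`, where `n` is the number of elements of `S`
with a `1` there. And `n = ℓ` everywhere: `α_0, …, α_{ℓ-1}` at coordinate `0`; `α_1, …, α_{ℓ-1}`
and the true literal of `x_i` at the coordinate of `x_i`; the `t_j` true literals of clause `j`
(distinct, since its variables are) and its `ℓ - t_j` gadgets at the coordinate of clause `j`.
Finally `|S| = ℓ + N + ∑_j (ℓ - t_j)`, and `1 ≤ t_j ≤ 3` gives the bounds.
-/

/-- The first coordinate of the Subset-φ instance. -/
def coord0 (N m : ℕ) : Fin (1 + N + m) := ⟨0, by omega⟩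

/-- The coordinate of variable `x_i`. -/
def coordVar (N m : ℕ) (i : Fin N) : Fin (1 + N + m) :=
  ⟨1 + i.val, by have := i.isLt; omega⟩

/-- The coordinate of clause `C_j`. -/
def coordCl (N m : ℕ) (j : Fin m) : Fin (1 + N + m) :=
  ⟨1 + N + j.val, by have := j.isLt; omega⟩

/-- The elements of the Subset-`φ_ℓ` instance constructed from a 3-CNF formula `Cl`. -/
def subsetPhiElem (F : Type*) [Field F] (N m ℓ : ℕ)
    (Cl : Fin m → Fin 3 → (Fin N × Bool)) :
    (Fin ℓ ⊕ ((Fin N × Bool) ⊕ (Fin m × Fin (ℓ - 1)))) → Fin (1 + N + m) → F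
  | Sum.inl k, c =>
      if c = coord0 N m then 1
      else if k.val ≠ 0 ∧ ∃ i : Fin N, c = coordVar N m i then 1
      else 0
  | Sum.inr (Sum.inl (i, b)), c =>
      if c = coordVar N m i then 1
      else if ∃ j : Fin m, c = coordCl N m j ∧ ∃ k : Fin 3, Cl j k = (i, b) then 1
      else 0
  | Sum.inr (Sum.inr (j, _)), c =>
      if c = coordCl N m j then 1 else 0

theorem Finset.sum_powersetCard_prod_eq_choose {ι R : Type*} [CommSemiring R] [DecidableEq R]
    {s : Finset ι} {f : ι → R} (hf : ∀ i ∈ s, f i = 0 ∨ f i = 1) (k : ℕ) :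
    ∑ t ∈ s.powersetCard k, ∏ i ∈ t, f i = (#{i ∈ s | f i = 1}).choose k := by
  classical
  set s₁ := {i ∈ s | f i = 1}
  have hprod : ∀ t ∈ s.powersetCard k, ∏ i ∈ t, f i = if t ⊆ s₁ then 1 else 0 := by
    intro t ht
    split_ifs with hts
    · exact prod_eq_one fun i hi => (mem_filter.1 (hts hi)).2
    · obtain ⟨i, hit, his₁⟩ := not_subset.1 hts
      have his : i ∈ s := (mem_powersetCard.1 ht).1 hit
      exact prod_eq_zero hit ((hf i his).resolve_right fun h => his₁ (mem_filter.2 ⟨his, h⟩))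
  have hsub : {t ∈ s.powersetCard k | t ⊆ s₁} = s₁.powersetCard k := by
    ext t
    simp only [mem_filter, mem_powersetCard]
    exact ⟨fun ⟨⟨_, hk⟩, h₁⟩ => ⟨h₁, hk⟩, fun ⟨h₁, hk⟩ => ⟨⟨h₁.trans (filter_subset _ _), hk⟩, h₁⟩⟩
  rw [sum_congr rfl hprod, sum_boole, hsub, card_powersetCard]

theorem Finset.card_filter_disjSum {α β : Type*} (s : Finset α) (t : Finset β)
    (p : α ⊕ β → Prop) [DecidablePred p] :
    #{x ∈ s.disjSum t | p x} = #{a ∈ s | p (.inl a)} + #{b ∈ t | p (.inr b)} := by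
  simp only [card_filter, sum_disjSum]

theorem Fin.card_filter_val_ne_zero (n : ℕ) : #{k : Fin n | k.val ≠ 0} = n - 1 := by
  have h := card_filter_add_card_filter_not (s := univ) (fun k : Fin n => k.val < 1)
  rw [card_filter_val_lt, card_univ, Fintype.card_fin] at h
  simp only [Nat.lt_one_iff, ← ne_eq] at h
  omega

section Coordinates

variable {N m : ℕ}

@[simp] lemma coordVar_ne_coord0 (i : Fin N) : coordVar N m i ≠ coord0 N m := by
  simp [coordVar, coord0, Fin.ext_iff]

@[simp] lemma coordCl_ne_coord0 (j : Fin m) : coordCl N m j ≠ coord0 N m := by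
  simp [coordCl, coord0, Fin.ext_iff]

@[simp] lemma coordCl_ne_coordVar (i : Fin N) (j : Fin m) : coordCl N m j ≠ coordVar N m i := by
  simp only [coordCl, coordVar, ne_eq, Fin.ext_iff]; omega

@[simp] lemma coord0_ne_coordVar (i : Fin N) : coord0 N m ≠ coordVar N m i :=
  (coordVar_ne_coord0 i).symm

@[simp] lemma coord0_ne_coordCl (j : Fin m) : coord0 N m ≠ coordCl N m j :=
  (coordCl_ne_coord0 j).symm

@[simp] lemma coordVar_ne_coordCl (i : Fin N) (j : Fin m) : coordVar N m i ≠ coordCl N m j :=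
  (coordCl_ne_coordVar i j).symm

@[simp] lemma coordVar_inj {i i' : Fin N} : coordVar N m i = coordVar N m i' ↔ i = i' := by
  simp [coordVar, Fin.ext_iff]

@[simp] lemma coordCl_inj {j j' : Fin m} : coordCl N m j = coordCl N m j' ↔ j = j' := by
  simp [coordCl, Fin.ext_iff]

lemma coord_cases (c : Fin (1 + N + m)) :
    c = coord0 N m ∨ (∃ i, c = coordVar N m i) ∨ ∃ j, c = coordCl N m j := by
  obtain ⟨c, hc⟩ := c
  rcases Nat.lt_or_ge c (1 + N) with h | h
  · rcases Nat.eq_zero_or_pos c with rfl | h0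
    · exact .inl rfl
    · exact .inr (.inl ⟨⟨c - 1, by omega⟩, by simp only [coordVar, Fin.mk.injEq]; omega⟩)
  · exact .inr (.inr ⟨⟨c - (1 + N), by omega⟩, by simp only [coordCl, Fin.mk.injEq]; omega⟩)

end Coordinates

lemma subsetPhiElem_eq_zero_or_one (F : Type*) [Field F] {N m ℓ : ℕ}
    (Cl : Fin m → Fin 3 → (Fin N × Bool)) (e : Fin ℓ ⊕ ((Fin N × Bool) ⊕ (Fin m × Fin (ℓ - 1))))
    (c : Fin (1 + N + m)) :
    subsetPhiElem F N m ℓ Cl e c = 0 ∨ subsetPhiElem F N m ℓ Cl e c = 1 := by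
  rcases e with _ | _ | _ <;> simp only [subsetPhiElem] <;> split_ifs <;> simp

section Witness

variable {N m : ℕ} (ℓ : ℕ) (Cl : Fin m → Fin 3 → (Fin N × Bool)) (A : Fin N → Bool)

def trueLiterals : Finset (Fin N × Bool) := {p | A p.1 = p.2}

def numTrueLiterals (j : Fin m) : ℕ := #{k : Fin 3 | A (Cl j k).1 = (Cl j k).2}

def gadgetPadding : Finset (Fin m × Fin (ℓ - 1)) :=
  {p | p.2.val < ℓ - numTrueLiterals Cl A p.1}

def completenessWitness : Finset (Fin ℓ ⊕ ((Fin N × Bool) ⊕ (Fin m × Fin (ℓ - 1)))) :=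
  univ.disjSum ((trueLiterals A).disjSum (gadgetPadding ℓ Cl A))

lemma trueLiterals_eq_image : trueLiterals A = univ.image fun i => (i, A i) := by
  ext ⟨i, b⟩
  grind [trueLiterals]

lemma card_trueLiterals : #(trueLiterals A) = N := by
  rw [trueLiterals_eq_image, card_image_of_injective _ fun i i' h => congrArg Prod.fst h,
    card_univ, Fintype.card_fin]

lemma card_trueLiterals_filter_fst_eq (i : Fin N) : #{p ∈ trueLiterals A | i = p.1} = 1 := by
  rw [card_eq_one]
  exact ⟨(i, A i), by ext ⟨i', b⟩; grind [trueLiterals]⟩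

lemma card_trueLiterals_filter_mem_clause (j : Fin m) (hinj : Function.Injective (Cl j)) :
    #{p ∈ trueLiterals A | ∃ k, Cl j k = p} = numTrueLiterals Cl A j := by
  have : {p ∈ trueLiterals A | ∃ k, Cl j k = p} =
      ({k | A (Cl j k).1 = (Cl j k).2} : Finset (Fin 3)).image (Cl j) := by
    ext p
    grind [trueLiterals]
  rw [this, card_image_of_injective _ hinj, numTrueLiterals]

variable {ℓ Cl A}

lemma numTrueLiterals_le_three (j : Fin m) : numTrueLiterals Cl A j ≤ 3 :=
  (card_filter_le _ _).trans_eq (card_fin 3)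

lemma card_gadgetPadding_filter_fst_eq {j : Fin m} (hj : 1 ≤ numTrueLiterals Cl A j) :
    #{p ∈ gadgetPadding ℓ Cl A | j = p.1} = ℓ - numTrueLiterals Cl A j := by
  have : {p ∈ gadgetPadding ℓ Cl A | j = p.1} =
      ({k | k.val < ℓ - numTrueLiterals Cl A j} : Finset (Fin (ℓ - 1))).map
        (Function.Embedding.sectR j _) := by
    ext ⟨j', k⟩
    simp only [gadgetPadding, mem_filter, mem_univ, true_and, mem_map,
      Function.Embedding.sectR_apply, Prod.mk.injEq, exists_eq_right_right]
    exact and_congr_left fun h => h ▸ Iff.rfl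
  rw [this, card_map, Fin.card_filter_val_lt]
  omega

lemma card_gadgetPadding (hA : ∀ j, 1 ≤ numTrueLiterals Cl A j) :
    #(gadgetPadding ℓ Cl A) = ∑ j, (ℓ - numTrueLiterals Cl A j) := by
  rw [card_eq_sum_card_fiberwise (f := Prod.fst) (t := univ) fun _ _ => mem_univ _]
  refine sum_congr rfl fun j _ => ?_
  simpa only [eq_comm] using card_gadgetPadding_filter_fst_eq (hA j)

lemma card_completenessWitness (hA : ∀ j, 1 ≤ numTrueLiterals Cl A j) :
    #(completenessWitness ℓ Cl A) = ℓ + N + ∑ j, (ℓ - numTrueLiterals Cl A j) := by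
  rw [completenessWitness, card_disjSum, card_disjSum, card_univ, Fintype.card_fin,
    card_trueLiterals, card_gadgetPadding hA, add_assoc]

end Witness

section Counting

variable (F : Type*) [Field F] [DecidableEq F] {N m ℓ : ℕ}
  {Cl : Fin m → Fin 3 → (Fin N × Bool)} {A : Fin N → Bool}

lemma card_completenessWitness_filter_coord0 :
    #{e ∈ completenessWitness ℓ Cl A | subsetPhiElem F N m ℓ Cl e (coord0 N m) = 1} = ℓ := by
  simp [completenessWitness, card_filter_disjSum, subsetPhiElem]

lemma card_completenessWitness_filter_coordVar (hℓ : 1 ≤ ℓ) (i : Fin N) :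
    #{e ∈ completenessWitness ℓ Cl A | subsetPhiElem F N m ℓ Cl e (coordVar N m i) = 1} = ℓ := by
  simp [completenessWitness, card_filter_disjSum, subsetPhiElem, Fin.card_filter_val_ne_zero,
    card_trueLiterals_filter_fst_eq, Nat.sub_add_cancel hℓ]

lemma card_completenessWitness_filter_coordCl (hℓ : 3 ≤ ℓ) (j : Fin m)
    (hinj : Function.Injective (Cl j)) (hj : 1 ≤ numTrueLiterals Cl A j) :
    #{e ∈ completenessWitness ℓ Cl A | subsetPhiElem F N m ℓ Cl e (coordCl N m j) = 1} = ℓ := by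
  simp [completenessWitness, card_filter_disjSum, subsetPhiElem,
    card_trueLiterals_filter_mem_clause _ _ j hinj, card_gadgetPadding_filter_fst_eq hj,
    Nat.add_sub_of_le ((numTrueLiterals_le_three j).trans hℓ)]

lemma card_completenessWitness_filter_eq_one (hℓ : 3 ≤ ℓ) (hinj : ∀ j, Function.Injective (Cl j))
    (hA : ∀ j, 1 ≤ numTrueLiterals Cl A j) (c : Fin (1 + N + m)) :
    #{e ∈ completenessWitness ℓ Cl A | subsetPhiElem F N m ℓ Cl e c = 1} = ℓ := by
  rcases coord_cases c with rfl | ⟨i, rfl⟩ | ⟨j, rfl⟩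
  · exact card_completenessWitness_filter_coord0 F
  · exact card_completenessWitness_filter_coordVar F (by omega) i
  · exact card_completenessWitness_filter_coordCl F hℓ j (hinj j) (hA j)

end Counting

/-- Completeness of the Subset-`φ_ℓ` reduction with a cardinality bound: if the 3-CNF
formula is satisfiable then there is a witness subset `S` whose `ℓ`-th elementary
symmetric polynomial is the all-ones vector and whose size lies between
`ℓ + N + (ℓ−3)·m` and `ℓ + N + (ℓ−1)·m`. -/
theorem subsetPhi_ell_completeness_card (N m ℓ : ℕ) (hℓ : 3 ≤ ℓ)
    (F : Type*) [Field F]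
    (Cl : Fin m → Fin 3 → (Fin N × Bool))
    (hdist : ∀ j : Fin m, ∀ k₁ k₂ : Fin 3, k₁ ≠ k₂ → (Cl j k₁).1 ≠ (Cl j k₂).1)
    (hsat : ∃ A : Fin N → Bool, ∀ j : Fin m, ∃ k : Fin 3, A (Cl j k).1 = (Cl j k).2) :
    ∃ S : Finset (Fin ℓ ⊕ ((Fin N × Bool) ⊕ (Fin m × Fin (ℓ - 1)))),
      (∀ c : Fin (1 + N + m),
        ∑ T ∈ S.powersetCard ℓ, ∏ e ∈ T, subsetPhiElem F N m ℓ Cl e c = 1) ∧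
      ℓ + N + (ℓ - 3) * m ≤ S.card ∧ S.card ≤ ℓ + N + (ℓ - 1) * m := by
  classical
  obtain ⟨A, hA⟩ := hsat
  have hpos (j : Fin m) : 1 ≤ numTrueLiterals Cl A j :=
    let ⟨k, hk⟩ := hA j
    card_pos.2 ⟨k, mem_filter.2 ⟨mem_univ _, hk⟩⟩
  have hinj (j : Fin m) : Function.Injective (Cl j) := fun k₁ k₂ h =>
    by_contra fun hne => hdist j k₁ k₂ hne (congrArg Prod.fst h)
  refine ⟨completenessWitness ℓ Cl A, fun c => ?_, ?_, ?_⟩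
  · rw [sum_powersetCard_prod_eq_choose (fun e _ => subsetPhiElem_eq_zero_or_one F Cl e c),
      card_completenessWitness_filter_eq_one F hℓ hinj hpos c, Nat.choose_self, Nat.cast_one]
  · have h := card_nsmul_le_sum univ (fun j => ℓ - numTrueLiterals Cl A j) (ℓ - 3)
      fun j _ => Nat.sub_le_sub_left (numTrueLiterals_le_three j) ℓ
    rw [card_univ, Fintype.card_fin, smul_eq_mul, mul_comm] at h
    rw [card_completenessWitness hpos]
    omega
  · have h := sum_le_card_nsmul univ (fun j => ℓ - numTrueLiterals Cl A j) (ℓ - 1)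
      fun j _ => Nat.sub_le_sub_left (hpos j) ℓ
    rw [card_univ, Fintype.card_fin, smul_eq_mul, mul_comm] at h
    rw [card_completenessWitness hpos]
    omega
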